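/- If a stochastic sequence [x_0,...,x_N] is [k1,N]-CM_F for every k1 ∈ [0,N] and is CM_L, then it is [k1,N]-CM_F and [0,k2]-CM_L for every k1, k2 ∈ [0,N]. -/

import Mathlib

/-!
Only the semi-graphoid rules of conditional independence are needed: decomposition, weak union
and contraction, the last two read off from the characterisation "`m₁` is independent of `m₂`
given `m'` iff conditioning any event of `m₁` on `m' ⊔ m₂` gives the same as conditioning it on
`m'`". For `j < k < k₂ < N`, CM_L at the pairs `(j, k)` and `(k, k₂)` contracts to
`x_{<j} ⊥ (x_k, x_{k₂}) | (x_j, x_N)`, hence `x_k ⊥ x_{<j} | (x_j, x_{k₂}, x_N)`, while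
`[j, N]`-CM_F gives `x_k ⊥ x_N | (x_j, x_{k₂})`; contracting these two removes `x_N` from the
conditioning. The cases `k = k₂` and `k₂ = N` are trivial.
-/

open MeasureTheory ProbabilityTheory Matrix

namespace CMPaper

variable {Ω : Type*}

/-- `x` is a jointly Gaussian family with mean `m` and covariance matrix `C`:
every linear combination of the components is a one-dimensional Gaussian variable
with the induced mean and variance. -/
def IsGaussianFamily [MeasurableSpace Ω] {ι : Type*} [Fintype ι] (μ : Measure Ω)
    (x : ι → Ω → ℝ) (m : ι → ℝ) (C : Matrix ι ι ℝ) : Prop :=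
  ∀ a : ι → ℝ,
    Measure.map (fun ω => ∑ i, a i * x i ω) μ =
      gaussianReal (∑ i, a i * m i) (Real.toNNReal (∑ i, ∑ j, a i * C i j * a j))

variable {N d : ℕ}

/-- The family of scalar components of a sequence of random vectors. -/
def flat (X : Fin (N + 1) → Ω → (Fin d → ℝ)) : Fin (N + 1) × Fin d → Ω → ℝ :=
  fun p ω => X p.1 ω p.2

/-- Markov property: conditioned on `x_j`, `x_k` (k > j) is independent of the past. -/
def IsMarkovSeq [MeasurableSpace Ω] [StandardBorelSpace Ω] (μ : Measure Ω) [IsFiniteMeasure μ]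
    (X : Fin (N + 1) → Ω → (Fin d → ℝ)) (hX : ∀ k, Measurable (X k)) : Prop :=
  ∀ j k : Fin (N + 1), j < k →
    CondIndepFun (MeasurableSpace.comap (X j) inferInstance) ((hX j).comap_le)
      (X k) (fun ω (i : {i : Fin (N + 1) // i < j}) => X i.1 ω) μ

/-- Reciprocal property: conditioned on `(x_{k1}, x_{k2})`, the subsequences inside and
outside of `[k1, k2]` are independent. -/
def IsReciprocalSeq [MeasurableSpace Ω] [StandardBorelSpace Ω] (μ : Measure Ω)
    [IsFiniteMeasure μ]
    (X : Fin (N + 1) → Ω → (Fin d → ℝ)) (hX : ∀ k, Measurable (X k)) : Prop :=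
  ∀ k1 k2 : Fin (N + 1), k1 < k2 →
    CondIndepFun (MeasurableSpace.comap (fun ω => (X k1 ω, X k2 ω)) inferInstance)
      (((hX k1).prodMk (hX k2)).comap_le)
      (fun ω (i : {i : Fin (N + 1) // k1 < i ∧ i < k2}) => X i.1 ω)
      (fun ω (i : {i : Fin (N + 1) // i < k1 ∨ k2 < i}) => X i.1 ω) μ

/-- `[k1,k2]`-CM_c property: for `k1 ≤ j < k ≤ k2`, conditioned on `(x_j, x_c)`,
`x_k` is independent of `[x_i]_{k1}^{j-1}`. -/
def IsCMcOn [MeasurableSpace Ω] [StandardBorelSpace Ω] (μ : Measure Ω) [IsFiniteMeasure μ]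
    (X : Fin (N + 1) → Ω → (Fin d → ℝ)) (hX : ∀ k, Measurable (X k))
    (k1 k2 c : Fin (N + 1)) : Prop :=
  ∀ j k : Fin (N + 1), k1 ≤ j → j < k → k ≤ k2 →
    CondIndepFun (MeasurableSpace.comap (fun ω => (X j ω, X c ω)) inferInstance)
      (((hX j).prodMk (hX c)).comap_le)
      (X k) (fun ω (i : {i : Fin (N + 1) // k1 ≤ i ∧ i < j}) => X i.1 ω) μ

/-- The `(i,j)` block (of size `d × d`) of a matrix indexed by `Fin (N+1) × Fin d`. -/
def BlockOf (M : Matrix (Fin (N + 1) × Fin d) (Fin (N + 1) × Fin d) ℝ)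
    (i j : Fin (N + 1)) : Matrix (Fin d) (Fin d) ℝ :=
  fun a b => M (i, a) (j, b)

/-- Block positions `(i,j)` with `|i - j| ≥ 2`. -/
def OffBand (i j : Fin (N + 1)) : Prop := i.1 + 2 ≤ j.1 ∨ j.1 + 2 ≤ i.1

/-- CM_L form: zero blocks off the tridiagonal band, except in the last block row/column. -/
def IsCMLFormB (M : Matrix (Fin (N + 1) × Fin d) (Fin (N + 1) × Fin d) ℝ) : Prop :=
  ∀ i j : Fin (N + 1), OffBand i j → i ≠ Fin.last N → j ≠ Fin.last N → BlockOf M i j = 0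

/-- CM_F form: zero blocks off the tridiagonal band, except in the first block row/column. -/
def IsCMFFormB (M : Matrix (Fin (N + 1) × Fin d) (Fin (N + 1) × Fin d) ℝ) : Prop :=
  ∀ i j : Fin (N + 1), OffBand i j → i ≠ 0 → j ≠ 0 → BlockOf M i j = 0

/-- Cyclic (block) tridiagonal form: zero blocks off the tridiagonal band,
except possibly the corner blocks `(0, N)` and `(N, 0)`. -/
def IsCyclicTridiagB (M : Matrix (Fin (N + 1) × Fin d) (Fin (N + 1) × Fin d) ℝ) : Prop :=
  ∀ i j : Fin (N + 1), OffBand i j → ¬(i = 0 ∧ j = Fin.last N) → ¬(i = Fin.last N ∧ j = 0) →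
    BlockOf M i j = 0

/-- Block tridiagonal form: zero blocks off the tridiagonal band. -/
def IsTridiagB (M : Matrix (Fin (N + 1) × Fin d) (Fin (N + 1) × Fin d) ℝ) : Prop :=
  ∀ i j : Fin (N + 1), OffBand i j → BlockOf M i j = 0

/-- Build a scalar matrix from a block description. -/
def ofBlocks (B : Fin (N + 1) → Fin (N + 1) → Matrix (Fin d) (Fin d) ℝ) :
    Matrix (Fin (N + 1) × Fin d) (Fin (N + 1) × Fin d) ℝ :=
  fun p q => B p.1 q.1 p.2 q.2

end CMPaper

namespace CMPaper

variable {N d : ℕ}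

/-- Block-diagonal noise covariance matrix `diag(G_0, …, G_N)`. -/
def noiseCov (Gk : Fin (N + 1) → Matrix (Fin d) (Fin d) ℝ) :
    Matrix (Fin (N + 1) × Fin d) (Fin (N + 1) × Fin d) ℝ :=
  ofBlocks (fun i j => if i = j then Gk i else 0)

/-- The block matrix `𝓖` of the forward CM_L model with boundary condition
`x_0 = e_0`, `x_N = G_{N,0} x_0 + e_N`: identity diagonal, `-F k = -G_{k,k-1}` on the
subdiagonal for `k = 1, …, N-1`, `-H k = -G_{k,N}` in the last block column for
`k = 1, …, N-1`, and `-K = -G_{N,0}` at position `(N, 0)`. -/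
def cmlModelMatBC1 (F H : Fin (N + 1) → Matrix (Fin d) (Fin d) ℝ)
    (K : Matrix (Fin d) (Fin d) ℝ) :
    Matrix (Fin (N + 1) × Fin d) (Fin (N + 1) × Fin d) ℝ :=
  ofBlocks (fun i j =>
    if i = j then 1
    else if j.1 + 1 = i.1 ∧ i ≠ Fin.last N then -(F i)
    else if j = Fin.last N ∧ i ≠ Fin.last N ∧ i ≠ 0 then -(H i)
    else if i = Fin.last N ∧ j = 0 then -K
    else 0)

/-- The block matrix `𝓖` of the forward CM_L model with boundary condition
`x_N = e_N`, `x_0 = G_{0,N} x_N + e_0`: identity diagonal, `-F k = -G_{k,k-1}` on the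
subdiagonal for `k = 1, …, N-1`, and `-H k = -G_{k,N}` in the last block column for
`k = 0, …, N-1`. -/
def cmlModelMatBC2 (F H : Fin (N + 1) → Matrix (Fin d) (Fin d) ℝ) :
    Matrix (Fin (N + 1) × Fin d) (Fin (N + 1) × Fin d) ℝ :=
  ofBlocks (fun i j =>
    if i = j then 1
    else if j.1 + 1 = i.1 ∧ i ≠ Fin.last N then -(F i)
    else if j = Fin.last N ∧ i ≠ Fin.last N then -(H i)
    else 0)

/-- The block matrix `𝓕` of the forward CM_F model: identity diagonal, `-2 G_{1,0}` at
`(1,0)`, `-Gsub k = -G_{k,k-1}` on the subdiagonal for `k = 2, …, N`, and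
`-Gcol k = -G_{k,0}` in the first block column for `k = 2, …, N`. -/
def cmfModelMat (Gsub Gcol : Fin (N + 1) → Matrix (Fin d) (Fin d) ℝ) :
    Matrix (Fin (N + 1) × Fin d) (Fin (N + 1) × Fin d) ℝ :=
  ofBlocks (fun i j =>
    if i = j then 1
    else if i.1 = 1 ∧ j = 0 then -(2 • Gsub i)
    else if j.1 + 1 = i.1 then -(Gsub i)
    else if j = 0 ∧ 2 ≤ i.1 then -(Gcol i)
    else 0)

end CMPaper



namespace MeasureTheory

variable {α E : Type*} {m m0 : MeasurableSpace α} {μ : Measure α}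
  [NormedAddCommGroup E] [NormedSpace ℝ E]

theorem setIntegral_eq_of_isPiSystem {S : Set (Set α)} (hm : m ≤ m0)
    (h_gen : m = MeasurableSpace.generateFrom S) (h_pi : IsPiSystem S)
    {f g : α → E} (hf : Integrable f μ) (hg : Integrable g μ)
    (h_univ : ∫ x, f x ∂μ = ∫ x, g x ∂μ) (h_basic : ∀ t ∈ S, ∫ x in t, f x ∂μ = ∫ x in t, g x ∂μ)
    {t : Set α} (ht : MeasurableSet[m] t) : ∫ x in t, f x ∂μ = ∫ x in t, g x ∂μ := by
  induction t, ht using MeasurableSpace.induction_on_inter h_gen h_pi with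
  | empty => simp
  | basic t ht => exact h_basic t ht
  | compl t ht h_eq =>
    have hf_add := integral_add_compl (hm t ht) hf
    have hg_add := integral_add_compl (hm t ht) hg
    rw [h_eq, h_univ, ← hg_add] at hf_add
    exact add_left_cancel hf_add
  | iUnion t h_disj ht h_eq =>
    rw [integral_iUnion (fun i ↦ hm _ (ht i)) h_disj hf.integrableOn,
      integral_iUnion (fun i ↦ hm _ (ht i)) h_disj hg.integrableOn]
    exact tsum_congr h_eq

end MeasureTheory

namespace MeasurableSpace

variable {α : Type*}

def interSets (m₁ m₂ : MeasurableSpace α) : Set (Set α) :=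
  {s | ∃ s₁ s₂, MeasurableSet[m₁] s₁ ∧ MeasurableSet[m₂] s₂ ∧ s = s₁ ∩ s₂}

theorem isPiSystem_interSets (m₁ m₂ : MeasurableSpace α) : IsPiSystem (interSets m₁ m₂) := by
  rintro _ ⟨s₁, s₂, hs₁, hs₂, rfl⟩ _ ⟨t₁, t₂, ht₁, ht₂, rfl⟩ -
  exact ⟨s₁ ∩ t₁, s₂ ∩ t₂, hs₁.inter ht₁, hs₂.inter ht₂, Set.inter_inter_inter_comm _ _ _ _⟩

theorem sup_eq_generateFrom_interSets (m₁ m₂ : MeasurableSpace α) :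
    m₁ ⊔ m₂ = generateFrom (interSets m₁ m₂) := by
  refine le_antisymm (sup_le (fun s hs ↦ ?_) (fun s hs ↦ ?_)) (generateFrom_le ?_)
  · exact measurableSet_generateFrom ⟨s, Set.univ, hs, .univ, (Set.inter_univ s).symm⟩
  · exact measurableSet_generateFrom ⟨Set.univ, s, .univ, hs, (Set.univ_inter s).symm⟩
  · rintro _ ⟨s₁, s₂, hs₁, hs₂, rfl⟩
    exact (le_sup_left (a := m₁) _ hs₁).inter (le_sup_right (a := m₁) _ hs₂)

end MeasurableSpace

namespace ProbabilityTheory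

variable {Ω : Type*} {m' m₁ m₂ m₃ : MeasurableSpace Ω} {mΩ : MeasurableSpace Ω}
  {μ : Measure Ω} [IsFiniteMeasure μ]

theorem condExp_indicator_condExp_ae_eq {B : Set Ω} (hB : MeasurableSet B)
    (f : Ω → ℝ) : μ[B.indicator (μ[f | m']) | m'] =ᵐ[μ] μ[f | m'] * μ⟦B | m'⟧ := by
  have h_eq : B.indicator (μ[f | m']) = μ[f | m'] * B.indicator (fun _ ↦ 1) := by
    ext ω; by_cases hω : ω ∈ B <;> simp [hω]
  rw [h_eq]
  refine condExp_mul_of_stronglyMeasurable_left stronglyMeasurable_condExp ?_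
    ((integrable_const 1).indicator hB)
  rw [← h_eq]
  exact integrable_condExp.indicator hB

theorem condExp_ae_eq_condExp_of_le_of_le {φ : Ω → ℝ} (h₁₂ : m₁ ≤ m₂) (h₂₃ : m₂ ≤ m₃)
    (h₃ : m₃ ≤ mΩ) (h : μ[φ | m₃] =ᵐ[μ] μ[φ | m₁]) : μ[φ | m₂] =ᵐ[μ] μ[φ | m₁] := by
  have h_tower : μ[μ[φ | m₃] | m₂] =ᵐ[μ] μ[φ | m₂] := condExp_condExp_of_le h₂₃ h₃
  have h_meas : μ[μ[φ | m₁] | m₂] = μ[φ | m₁] :=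
    condExp_of_stronglyMeasurable (h₂₃.trans h₃) (stronglyMeasurable_condExp.mono h₁₂)
      integrable_condExp
  exact h_tower.symm.trans ((condExp_congr_ae h).trans h_meas.eventuallyEq)

variable [StandardBorelSpace Ω]

theorem CondIndep.condExp_indicator_sup_ae_eq {hm' : m' ≤ mΩ} (h : CondIndep m' m₁ m₂ hm' μ)
    (hm₁ : m₁ ≤ mΩ) (hm₂ : m₂ ≤ mΩ) {s : Set Ω} (hs : MeasurableSet[m₁] s) :
    μ⟦s | m' ⊔ m₂⟧ =ᵐ[μ] μ⟦s | m'⟧ := by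
  have h_int : Integrable (s.indicator fun _ ↦ (1 : ℝ)) μ :=
    (integrable_const 1).indicator (hm₁ s hs)
  refine (ae_eq_condExp_of_forall_setIntegral_eq (sup_le hm' hm₂) h_int
    (fun _ _ _ ↦ integrable_condExp.integrableOn) (fun E hE _ ↦ ?_)
    (stronglyMeasurable_condExp.mono (le_sup_left : m' ≤ m' ⊔ m₂)).aestronglyMeasurable).symm
  refine setIntegral_eq_of_isPiSystem (sup_le hm' hm₂)
    (MeasurableSpace.sup_eq_generateFrom_interSets m' m₂)
    (MeasurableSpace.isPiSystem_interSets m' m₂) integrable_condExp h_int (integral_condExp hm')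
    ?_ hE
  rintro _ ⟨C, B, hC, hB, rfl⟩
  have hB' : MeasurableSet B := hm₂ B hB
  have h_prod := (condIndep_iff m' m₁ m₂ hm' hm₁ hm₂ μ).1 h s B hs hB
  calc ∫ ω in C ∩ B, (μ⟦s | m'⟧) ω ∂μ
      = ∫ ω in C, μ[B.indicator (μ⟦s | m'⟧) | m'] ω ∂μ := by
        rw [setIntegral_condExp hm' (integrable_condExp.indicator hB') hC,
          setIntegral_indicator hB']
    _ = ∫ ω in C, (μ⟦s ∩ B | m'⟧) ω ∂μ :=
        setIntegral_congr_ae (hm' C hC) (Filter.Eventually.mono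
          ((condExp_indicator_condExp_ae_eq hB' _).trans h_prod.symm) fun _ h _ ↦ h)
    _ = ∫ ω in C ∩ B, s.indicator (fun _ ↦ (1 : ℝ)) ω ∂μ := by
        rw [setIntegral_condExp hm' ((integrable_const 1).indicator ((hm₁ s hs).inter hB')) hC,
          ← setIntegral_indicator hB', Set.indicator_indicator, Set.inter_comm]

theorem condIndep_of_condExp_indicator_sup_ae_eq (hm' : m' ≤ mΩ) (hm₁ : m₁ ≤ mΩ)
    (hm₂ : m₂ ≤ mΩ) (h : ∀ s, MeasurableSet[m₁] s → μ⟦s | m' ⊔ m₂⟧ =ᵐ[μ] μ⟦s | m'⟧) :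
    CondIndep m' m₁ m₂ hm' μ := by
  refine (condIndep_iff m' m₁ m₂ hm' hm₁ hm₂ μ).2 fun s B hs hB ↦ ?_
  have hB' : MeasurableSet B := hm₂ B hB
  have h_ind : (s ∩ B).indicator (fun _ ↦ (1 : ℝ)) = B.indicator (s.indicator fun _ ↦ 1) := by
    rw [Set.indicator_indicator, Set.inter_comm]
  calc μ⟦s ∩ B | m'⟧
      =ᵐ[μ] μ[μ[B.indicator (s.indicator fun _ ↦ 1) | m' ⊔ m₂] | m'] := by
        rw [h_ind]; exact (condExp_condExp_of_le le_sup_left (sup_le hm' hm₂)).symm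
    _ =ᵐ[μ] μ[B.indicator (μ⟦s | m' ⊔ m₂⟧) | m'] :=
        condExp_congr_ae (condExp_indicator ((integrable_const 1).indicator (hm₁ s hs))
          (le_sup_right (a := m') B hB))
    _ =ᵐ[μ] μ[B.indicator (μ⟦s | m'⟧) | m'] :=
        condExp_congr_ae ((h s hs).mono fun ω hω ↦ by simp only [Set.indicator, hω])
    _ =ᵐ[μ] μ⟦s | m'⟧ * μ⟦B | m'⟧ := condExp_indicator_condExp_ae_eq hB' _

theorem condIndep_iff_condExp_indicator_sup_ae_eq (hm' : m' ≤ mΩ) (hm₁ : m₁ ≤ mΩ)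
    (hm₂ : m₂ ≤ mΩ) :
    CondIndep m' m₁ m₂ hm' μ ↔ ∀ s, MeasurableSet[m₁] s → μ⟦s | m' ⊔ m₂⟧ =ᵐ[μ] μ⟦s | m'⟧ :=
  ⟨fun h _ hs ↦ h.condExp_indicator_sup_ae_eq hm₁ hm₂ hs,
    condIndep_of_condExp_indicator_sup_ae_eq hm' hm₁ hm₂⟩

theorem CondIndep.weak_union (hm' : m' ≤ mΩ) (hm₁ : m₁ ≤ mΩ) (hm₂ : m₂ ≤ mΩ) (hm₃ : m₃ ≤ mΩ)
    (h : CondIndep m' m₁ (m₂ ⊔ m₃) hm' μ) : CondIndep (m' ⊔ m₂) m₁ m₃ (sup_le hm' hm₂) μ := by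
  rw [condIndep_iff_condExp_indicator_sup_ae_eq hm' hm₁ (sup_le hm₂ hm₃)] at h
  refine (condIndep_iff_condExp_indicator_sup_ae_eq _ hm₁ hm₃).2 fun s hs ↦ ?_
  have h_drop : μ⟦s | m' ⊔ m₂⟧ =ᵐ[μ] μ⟦s | m'⟧ :=
    condExp_ae_eq_condExp_of_le_of_le le_sup_left (sup_le_sup_left le_sup_left m')
      (sup_le hm' (sup_le hm₂ hm₃)) (h s hs)
  rw [sup_assoc]
  exact (h s hs).trans h_drop.symm

theorem CondIndep.contraction (hm' : m' ≤ mΩ) (hm₁ : m₁ ≤ mΩ) (hm₂ : m₂ ≤ mΩ) (hm₃ : m₃ ≤ mΩ)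
    (h₂ : CondIndep m' m₁ m₂ hm' μ) (h₃ : CondIndep (m' ⊔ m₂) m₁ m₃ (sup_le hm' hm₂) μ) :
    CondIndep m' m₁ (m₂ ⊔ m₃) hm' μ := by
  rw [condIndep_iff_condExp_indicator_sup_ae_eq _ hm₁ hm₂] at h₂
  rw [condIndep_iff_condExp_indicator_sup_ae_eq _ hm₁ hm₃] at h₃
  refine (condIndep_iff_condExp_indicator_sup_ae_eq _ hm₁ (sup_le hm₂ hm₃)).2 fun s hs ↦ ?_
  rw [← sup_assoc]
  exact (h₃ s hs).trans (h₂ s hs)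

end ProbabilityTheory

namespace CMPaper

variable {Ω : Type*} {N d : ℕ}

abbrev sigmaAt (X : Fin (N + 1) → Ω → (Fin d → ℝ)) (i : Fin (N + 1)) : MeasurableSpace Ω :=
  MeasurableSpace.comap (X i) inferInstance

abbrev sigmaSegment (X : Fin (N + 1) → Ω → (Fin d → ℝ)) (a b : Fin (N + 1)) :
    MeasurableSpace Ω :=
  MeasurableSpace.comap (fun ω (i : {i : Fin (N + 1) // a ≤ i ∧ i < b}) => X i.1 ω) inferInstance

variable {X : Fin (N + 1) → Ω → (Fin d → ℝ)}

theorem sigmaAt_le_sigmaSegment {a b i : Fin (N + 1)} (ha : a ≤ i) (hb : i < b) :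
    sigmaAt X i ≤ sigmaSegment X a b :=
  MeasurableSpace.comap_le_comap_of_eq_comp _ (measurable_pi_apply ⟨i, ha, hb⟩) rfl

theorem sigmaSegment_mono {a b a' b' : Fin (N + 1)} (ha : a' ≤ a) (hb : b ≤ b') :
    sigmaSegment X a b ≤ sigmaSegment X a' b' :=
  MeasurableSpace.comap_le_comap_of_eq_comp
    (fun v (i : {i : Fin (N + 1) // a ≤ i ∧ i < b}) ↦ v ⟨i.1, ha.trans i.2.1, i.2.2.trans_le hb⟩)
    (measurable_pi_lambda _ fun _ ↦ measurable_pi_apply _) rfl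

variable [mΩ : MeasurableSpace Ω]

theorem sigmaAt_le (hX : ∀ k, Measurable (X k)) (i : Fin (N + 1)) :
    sigmaAt X i ≤ mΩ :=
  (hX i).comap_le

theorem sigmaSegment_le (hX : ∀ k, Measurable (X k)) (a b : Fin (N + 1)) :
    sigmaSegment X a b ≤ mΩ :=
  (measurable_pi_lambda (fun ω (i : {i : Fin (N + 1) // a ≤ i ∧ i < b}) => X i.1 ω)
    fun i ↦ hX i.1).comap_le

variable [StandardBorelSpace Ω] {μ : Measure Ω} [IsFiniteMeasure μ]

theorem condIndepFun_segment_iff_condIndep (hX : ∀ k, Measurable (X k))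
    (a c j k : Fin (N + 1)) :
    CondIndepFun (MeasurableSpace.comap (fun ω => (X j ω, X c ω)) inferInstance)
      (((hX j).prodMk (hX c)).comap_le)
      (X k) (fun ω (i : {i : Fin (N + 1) // a ≤ i ∧ i < j}) => X i.1 ω) μ ↔
    CondIndep (sigmaAt X j ⊔ sigmaAt X c) (sigmaAt X k) (sigmaSegment X a j)
      (sup_le (sigmaAt_le hX j) (sigmaAt_le hX c)) μ := by
  have h_pair : MeasurableSpace.comap (fun ω => (X j ω, X c ω)) inferInstance =
      sigmaAt X j ⊔ sigmaAt X c :=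
    MeasurableSpace.comap_prodMk _ _
  rw [condIndepFun_iff_condIndep]
  simp only [h_pair]

theorem condIndep_of_cmF_of_cmL (hX : ∀ k, Measurable (X k)) {j k k₂ : Fin (N + 1)}
    (hCMF : IsCMcOn μ X hX j (Fin.last N) j) (hCML : IsCMcOn μ X hX 0 (Fin.last N) (Fin.last N))
    (hjk : j < k) (hkk₂ : k < k₂) (hk₂ : k₂ < Fin.last N) :
    CondIndep (sigmaAt X j ⊔ sigmaAt X k₂) (sigmaAt X k) (sigmaSegment X 0 j)
      (sup_le (sigmaAt_le hX j) (sigmaAt_le hX k₂)) μ := by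
  have hσ := sigmaAt_le hX
  have hpast := sigmaSegment_le hX 0 j
  have hCML_jk := (condIndepFun_segment_iff_condIndep hX _ _ _ _).1
    (hCML j k (Fin.zero_le j) hjk (Fin.le_last k))
  have hCML_kk₂ := (condIndepFun_segment_iff_condIndep hX _ _ _ _).1
    (hCML k k₂ (Fin.zero_le k) hkk₂ (Fin.le_last k₂))
  have hCMF_k₂N := (condIndepFun_segment_iff_condIndep hX _ _ _ _).1
    (hCMF k₂ (Fin.last N) (hjk.trans hkk₂).le hk₂ le_rfl)
  have h_past : sigmaAt X j ⊔ sigmaSegment X 0 j ≤ sigmaSegment X 0 k :=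
    sup_le (sigmaAt_le_sigmaSegment (Fin.zero_le j) hjk) (sigmaSegment_mono le_rfl hjk.le)
  have hk₂_past := (condIndep_of_condIndep_of_le_right hCML_kk₂ h_past).weak_union
    (sup_le (hσ k) (hσ _)) (hσ k₂) (hσ j) hpast
  have hpast_kk₂ : CondIndep (sigmaAt X j ⊔ sigmaAt X (Fin.last N)) (sigmaSegment X 0 j)
      (sigmaAt X k₂ ⊔ sigmaAt X k) (sup_le (hσ j) (hσ _)) μ := by
    rw [sup_comm (sigmaAt X k₂)]
    refine hCML_jk.symm.contraction (sup_le (hσ j) (hσ _)) hpast (hσ k) (hσ k₂) ?_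
    convert hk₂_past.symm using 1
    ac_rfl
  have hpast_k := hpast_kk₂.weak_union (sup_le (hσ j) (hσ _)) hpast (hσ k₂) (hσ k)
  have hk_N : CondIndep (sigmaAt X j ⊔ sigmaAt X k₂) (sigmaAt X k) (sigmaAt X (Fin.last N))
      (sup_le (hσ j) (hσ k₂)) μ := by
    convert (condIndep_of_condIndep_of_le_right hCMF_k₂N
      (sigmaAt_le_sigmaSegment hjk.le hkk₂)).symm using 1
    exact sup_comm _ _
  have hk_N_past := hk_N.contraction (sup_le (hσ j) (hσ k₂)) (hσ k) (hσ _) hpast (by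
    convert hpast_k.symm using 1
    ac_rfl)
  exact condIndep_of_condIndep_of_le_right hk_N_past le_sup_right

end CMPaper

theorem stmt_7_general {Ω : Type*} [MeasurableSpace Ω] [StandardBorelSpace Ω]
    (μ : Measure Ω) [IsProbabilityMeasure μ] {N d : ℕ}
    (X : Fin (N + 1) → Ω → (Fin d → ℝ)) (hX : ∀ k, Measurable (X k))
    (hCMF : ∀ k1 : Fin (N + 1), CMPaper.IsCMcOn μ X hX k1 (Fin.last N) k1)
    (hCML : CMPaper.IsCMcOn μ X hX 0 (Fin.last N) (Fin.last N)) :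
    ∀ k1 k2 : Fin (N + 1),
      CMPaper.IsCMcOn μ X hX k1 (Fin.last N) k1 ∧ CMPaper.IsCMcOn μ X hX 0 k2 k2 := by
  intro k1 k2
  refine ⟨hCMF k1, fun j k hj hjk hk ↦ ?_⟩
  rcases (Fin.le_last k2).lt_or_eq with hk2 | rfl
  · rcases hk.lt_or_eq with hkk2 | rfl
    · exact (CMPaper.condIndepFun_segment_iff_condIndep hX _ _ _ _).2
        (CMPaper.condIndep_of_cmF_of_cmL hX (hCMF j) hCML hjk hkk2 hk2)
    · exact condIndepFun_of_measurable_left (comap_measurable _).snd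
        (measurable_pi_lambda _ fun i ↦ hX i.1)
  · exact hCML j k hj hjk hk

/-- If a stochastic sequence is `[k1,N]`-CM_F for every `k1` and is CM_L, then it
is `[k1,N]`-CM_F and `[0,k2]`-CM_L for all `k1, k2`. -/
theorem stmt_7 {Ω : Type*} [MeasurableSpace Ω] [StandardBorelSpace Ω] [Nonempty Ω]
    (μ : Measure Ω) [IsProbabilityMeasure μ] {N d : ℕ}
    (X : Fin (N + 1) → Ω → (Fin d → ℝ)) (hX : ∀ k, Measurable (X k))
    (hCMF : ∀ k1 : Fin (N + 1), CMPaper.IsCMcOn μ X hX k1 (Fin.last N) k1)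
    (hCML : CMPaper.IsCMcOn μ X hX 0 (Fin.last N) (Fin.last N)) :
    ∀ k1 k2 : Fin (N + 1),
      CMPaper.IsCMcOn μ X hX k1 (Fin.last N) k1 ∧ CMPaper.IsCMcOn μ X hX 0 k2 k2 :=
  stmt_7_general μ X hX hCMF hCML
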